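/- arXiv:2204.12619 — 2 statements merged into one kernel-verified Lean document; each statement's English description precedes it below -/
import Mathlib

section
/- Uniqueness lemma via the null space property: suppose A is an m×n real matrix such that for every nonzero v in the kernel of A and every index set S of size at most s, ∑_{j∈S} |v_j| < ∑_{j∉S} |v_j|. Then for any x̂ ∈ ℝ^n with support of size at most s, x̂ is the unique minimizer of ‖x‖₁ subject to Ax = A x̂. -/
theorem stmt_9 (m n s : ℕ) (A : Matrix (Fin m) (Fin n) ℝ)
    (hNSP : ∀ v : Fin n → ℝ, A.mulVec v = 0 → v ≠ 0 →
      ∀ S : Finset (Fin n), S.card ≤ s → ∑ j ∈ S, |v j| < ∑ j ∈ Sᶜ, |v j|)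
    (xhat : Fin n → ℝ) (hxhat : {j : Fin n | xhat j ≠ 0}.ncard ≤ s) :
    ∀ x : Fin n → ℝ, A.mulVec x = A.mulVec xhat → x ≠ xhat →
      ∑ j, |xhat j| < ∑ j, |x j| := by
  intro x hAx hne
  set v : Fin n → ℝ := fun j => xhat j - x j with hv
  have hAv : A.mulVec v = 0 := by
    have : A.mulVec v = A.mulVec xhat - A.mulVec x := by
      exact A.mulVec_sub xhat x
    rw [this, hAx, sub_self]
  have hvne : v ≠ 0 := by
    intro h
    apply hne
    funext j
    have := congrFun h j
    simp [hv] at this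
    linarith
  set S : Finset (Fin n) := Finset.univ.filter (fun j => xhat j ≠ 0) with hS
  have hScard : S.card ≤ s := by
    have : {j : Fin n | xhat j ≠ 0}.ncard = S.card := by
      rw [Set.ncard_eq_toFinset_card']
      congr 1
      ext j
      simp [hS]
    omega
  have key := hNSP v hAv hvne S hScard
  have h1 : ∑ j, |xhat j| = ∑ j ∈ S, |xhat j| := by
    rw [← Finset.sum_filter_add_sum_filter_not Finset.univ (fun j => xhat j ≠ 0)]
    have : ∑ j ∈ Finset.univ.filter (fun j => ¬ xhat j ≠ 0), |xhat j| = 0 := by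
      apply Finset.sum_eq_zero
      intro j hj
      simp at hj
      simp [hj]
    rw [this, add_zero]
  have h2 : ∀ j ∈ Sᶜ, |v j| = |x j| := by
    intro j hj
    simp [hS] at hj
    simp [hv, hj]
  have h3 : ∑ j ∈ S, |xhat j| ≤ ∑ j ∈ S, |x j| + ∑ j ∈ S, |v j| := by
    rw [← Finset.sum_add_distrib]
    apply Finset.sum_le_sum
    intro j _
    have : xhat j = x j + v j := by simp [hv]
    rw [this]
    exact abs_add_le _ _
  have h4 : ∑ j, |x j| = ∑ j ∈ S, |x j| + ∑ j ∈ Sᶜ, |x j| :=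
    (Finset.sum_add_sum_compl S _).symm
  rw [h1, h4]
  have h5 : ∑ j ∈ Sᶜ, |v j| = ∑ j ∈ Sᶜ, |x j| := Finset.sum_congr rfl h2
  linarith
end

section
/- Conversely, if an m×n matrix A fails the null space property of order s — i.e., there is a nonzero v ∈ ker A and a set S with |S| ≤ s and ∑_{j∈S}|v_j| ≥ ∑_{j∉S}|v_j| — then there exists an s-sparse vector x̂ that is not the unique ℓ1 minimizer of { ‖x‖₁ : Ax = Ax̂ }. -/
theorem stmt_10 (m n s : ℕ) (A : Matrix (Fin m) (Fin n) ℝ)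
    (v : Fin n → ℝ) (hv0 : v ≠ 0) (hker : A.mulVec v = 0)
    (S : Finset (Fin n)) (hScard : S.card ≤ s)
    (hfail : ∑ j ∈ Sᶜ, |v j| ≤ ∑ j ∈ S, |v j|) :
    ∃ xhat : Fin n → ℝ, {j : Fin n | xhat j ≠ 0}.ncard ≤ s ∧
      ∃ x : Fin n → ℝ, x ≠ xhat ∧ A.mulVec x = A.mulVec xhat ∧
        ∑ j, |x j| ≤ ∑ j, |xhat j| := by
  refine ⟨fun j => if j ∈ S then v j else 0, ?_, fun j => if j ∈ S then 0 else -v j, ?_, ?_, ?_⟩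
  · refine le_trans (le_trans (Set.ncard_le_ncard ?_ S.finite_toSet) ?_) hScard
    · intro j hj
      simp only [Set.mem_setOf_eq] at hj
      by_contra h
      rw [Finset.mem_coe] at h
      simp [h] at hj
    · simp [Set.ncard_coe_finset]
  · intro h
    apply hv0
    funext j
    have := congrFun h j
    by_cases hj : j ∈ S <;> simp [hj] at this <;> simp [this]
  · have : (fun j => if j ∈ S then (0:ℝ) else -v j) = (fun j => if j ∈ S then v j else 0) - v := by
      funext j; by_cases hj : j ∈ S <;> simp [hj]
    rw [this, Matrix.mulVec_sub, hker, sub_zero]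
  · rw [← Finset.sum_compl_add_sum S (fun j => |if j ∈ S then (0:ℝ) else -v j|),
        ← Finset.sum_compl_add_sum S (fun j => |if j ∈ S then v j else 0|)]
    have h1 : ∑ j ∈ Sᶜ, |if j ∈ S then (0:ℝ) else -v j| = ∑ j ∈ Sᶜ, |v j| := by
      apply Finset.sum_congr rfl; intro j hj
      simp [Finset.mem_compl.mp hj]
    have h2 : ∑ j ∈ S, |if j ∈ S then (0:ℝ) else -v j| = 0 := by
      apply Finset.sum_eq_zero; intro j hj; simp [hj]
    have h3 : ∑ j ∈ Sᶜ, |if j ∈ S then v j else (0:ℝ)| = 0 := by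
      apply Finset.sum_eq_zero; intro j hj; simp [Finset.mem_compl.mp hj]
    have h4 : ∑ j ∈ S, |if j ∈ S then v j else (0:ℝ)| = ∑ j ∈ S, |v j| := by
      apply Finset.sum_congr rfl; intro j hj; simp [hj]
    rw [h1, h2, h3, h4]
    linarith
end
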